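/- Suppose n ≥ 3 agents, m ≥ 2 objects, and the domain of preferences contains all single-minded dichotomous classical preferences (including ones with negative income effect, where w_i is increasing in t). Then there is no mechanism on this domain that is simultaneously dominant strategy incentive compatible, Pareto efficient, individually rational, and satisfies no subsidy. -/

import Mathlib

open Finset

/-- A classical preference over outcomes (bundle, payment). -/
structure ClassicalPref (m : ℕ) where
  /-- the weak preference relation over outcomes -/
  pref : (Finset (Fin m) × ℝ) → (Finset (Fin m) × ℝ) → Prop
  total : ∀ x y, pref x y ∨ pref y x
  transitive : ∀ x y z, pref x y → pref y z → pref x z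
  money_mono : ∀ (A : Finset (Fin m)) (t t' : ℝ), t < t' →
    pref (A, t) (A, t') ∧ ¬ pref (A, t') (A, t)
  free_disposal : ∀ (A A' : Finset (Fin m)) (t : ℝ), A' ⊆ A → pref (A, t) (A', t)
  continuity : ∀ (Z : Finset (Fin m) × ℝ) (A : Finset (Fin m)),
    IsClosed {t : ℝ | pref (A, t) Z} ∧ IsClosed {t : ℝ | pref Z (A, t)}
  finiteness : ∀ (t : ℝ) (A A' : Finset (Fin m)), ∃ t' t'' : ℝ,
    pref (A', t') (A, t) ∧ pref (A, t) (A', t'')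

/-- Willingness to pay: the indifference payment increment to `(∅,t)`. -/
noncomputable def WPc {m : ℕ} (R : ClassicalPref m) (A : Finset (Fin m)) (t : ℝ) : ℝ :=
  sInf {x : ℝ | R.pref (∅, t) (A, t + x)}

/-- An allocation consists of pairwise-disjoint bundles. -/
def DisjointAlloc {n m : ℕ} (A : Fin n → Finset (Fin m)) : Prop :=
  ∀ i j : Fin n, i ≠ j → Disjoint (A i) (A j)

/-- `(A',t')` Pareto dominates `(A,t)` at profile `Rp`. -/
def Dominates {n m : ℕ} (Rp : Fin n → ClassicalPref m)
    (A : Fin n → Finset (Fin m)) (t : Fin n → ℝ)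
    (A' : Fin n → Finset (Fin m)) (t' : Fin n → ℝ) : Prop :=
  DisjointAlloc A' ∧ (∀ i, (Rp i).pref (A' i, t' i) (A i, t i)) ∧
  (∑ i, t i ≤ ∑ i, t' i) ∧
  ((∃ i, ¬ (Rp i).pref (A i, t i) (A' i, t' i)) ∨ ∑ i, t i < ∑ i, t' i)

/-- A single-minded dichotomous classical preference. -/
def IsSingleMinded {m : ℕ} (R : ClassicalPref m) : Prop :=
  ∃ (S0 : Finset (Fin m)) (w : ℝ → ℝ), S0 ≠ ∅ ∧ (∀ t : ℝ, 0 < w t) ∧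
    ∀ (A : Finset (Fin m)) (t : ℝ),
      (S0 ⊆ A → R.pref (A, t + w t) (∅, t) ∧ R.pref (∅, t) (A, t + w t)) ∧
      (¬ S0 ⊆ A → R.pref (A, t) (∅, t) ∧ R.pref (∅, t) (A, t))

/-- A quasilinear dichotomous classical preference. -/
def IsQLDich {m : ℕ} (R : ClassicalPref m) : Prop :=
  ∃ (S : Set (Finset (Fin m))) (v : ℝ), 0 < v ∧ S.Nonempty ∧
    (∅ : Finset (Fin m)) ∉ S ∧ (∀ A ∈ S, ∀ B : Finset (Fin m), A ⊆ B → B ∈ S) ∧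
    ∀ (A : Finset (Fin m)) (t : ℝ),
      (A ∈ S → R.pref (A, t + v) (∅, t) ∧ R.pref (∅, t) (A, t + v)) ∧
      (A ∉ S → R.pref (A, t) (∅, t) ∧ R.pref (∅, t) (A, t))

/-!
Agents `i₀` and `i₁` want only `a` and only `b` respectively, with a negative income effect and
willingness to pay `4` at payment `0`; every other agent wants `{a, b}` with quasilinear value `6`.
Since `4 + 4 > 6`, efficiency makes `i₀` and `i₁` the winners. Had `i₀` reported a quasilinear
value `9/4` for `a`, she would still win (`9/4 + 4 > 6`) and, by individual rationality, pay at
most `9/4`; so strategy-proofness caps her truthful payment at `9/4`, and likewise for `i₁`. At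
such low payments the income effect makes it cheap to compensate each of them for losing:
refunding `p + g p < 3` suffices. Selling `{a, b}` to a third agent for `6` instead then raises
revenue without hurting anyone, contradicting Pareto efficiency.
-/

noncomputable section

variable {n m : ℕ}

lemma DisjointAlloc.eq_of_mem {A : Fin n → Finset (Fin m)} (hA : DisjointAlloc A) {x : Fin m}
    {j k : Fin n} (hj : x ∈ A j) (hk : x ∈ A k) : j = k := by
  by_contra hjk
  exact Finset.disjoint_left.1 (hA j k hjk) hj hk

/-- The single-minded preference with utility `g t` at payment `t` when the bundle contains `S`,
and `-t` otherwise. -/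
structure SMUtility (m : ℕ) where
  S : Finset (Fin m)
  g : ℝ → ℝ
  S_nonempty : S.Nonempty
  strictAnti : StrictAnti g
  continuous : Continuous g
  surjective : Function.Surjective g
  neg_lt : ∀ t, -t < g t

namespace SMUtility

variable (d : SMUtility m)

def u (A : Finset (Fin m)) (t : ℝ) : ℝ := if d.S ⊆ A then d.g t else -t

variable {d}

lemma u_of_subset {A : Finset (Fin m)} (h : d.S ⊆ A) (t : ℝ) : d.u A t = d.g t := if_pos h

lemma u_of_not_subset {A : Finset (Fin m)} (h : ¬ d.S ⊆ A) (t : ℝ) : d.u A t = -t := if_neg h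

variable (d)

lemma u_empty (t : ℝ) : d.u ∅ t = -t :=
  u_of_not_subset (by simpa using d.S_nonempty.ne_empty) t

lemma u_strictAnti (A : Finset (Fin m)) : StrictAnti (d.u A) := by
  unfold u
  split_ifs
  exacts [d.strictAnti, fun _ _ h => neg_lt_neg h]

lemma u_continuous (A : Finset (Fin m)) : Continuous (d.u A) := by
  unfold u
  split_ifs
  exacts [d.continuous, continuous_neg]

lemma u_surjective (A : Finset (Fin m)) : Function.Surjective (d.u A) := by
  unfold u
  split_ifs
  exacts [d.surjective, fun c => ⟨-c, neg_neg c⟩]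

lemma u_mono {A A' : Finset (Fin m)} (h : A ⊆ A') (t : ℝ) : d.u A t ≤ d.u A' t := by
  by_cases hA : d.S ⊆ A
  · rw [u_of_subset hA, u_of_subset (hA.trans h)]
  · rw [u_of_not_subset hA]
    by_cases hA' : d.S ⊆ A'
    · exact (u_of_subset hA' t).symm ▸ (d.neg_lt t).le
    · rw [u_of_not_subset hA']

def toPref : ClassicalPref m where
  pref x y := d.u y.1 y.2 ≤ d.u x.1 x.2
  total _ _ := le_total _ _
  transitive _ _ _ h₁ h₂ := h₂.trans h₁
  money_mono A _ _ h := ⟨(d.u_strictAnti A h).le, not_le.2 (d.u_strictAnti A h)⟩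
  free_disposal _ _ t h := d.u_mono h t
  continuity _ A := ⟨isClosed_Ici.preimage (d.u_continuous A),
    isClosed_Iic.preimage (d.u_continuous A)⟩
  finiteness t A A' := by
    obtain ⟨s, hs⟩ := d.u_surjective A' (d.u A t)
    exact ⟨s, s, hs.ge, hs.le⟩

lemma toPref_pref (x y : Finset (Fin m) × ℝ) :
    d.toPref.pref x y ↔ d.u y.1 y.2 ≤ d.u x.1 x.2 := Iff.rfl

/-- The paper's willingness to pay: `(S, t + w t)` is indifferent to `(∅, t)`. -/
def w (t : ℝ) : ℝ := Function.surjInv d.surjective (-t) - t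

lemma g_add_w (t : ℝ) : d.g (t + d.w t) = -t := by
  simp [w, Function.surjInv_eq]

lemma g_w_zero : d.g (d.w 0) = 0 := by
  simpa using d.g_add_w 0

lemma w_pos (t : ℝ) : 0 < d.w t :=
  sub_pos.2 <| d.strictAnti.lt_iff_gt.1 <| by
    simpa [w, Function.surjInv_eq] using d.neg_lt t

lemma w_zero_eq {x : ℝ} (h : d.g x = 0) : d.w 0 = x :=
  d.strictAnti.injective (d.g_w_zero.trans h.symm)

lemma isSingleMinded : IsSingleMinded d.toPref := by
  refine ⟨d.S, d.w, d.S_nonempty.ne_empty, d.w_pos, fun A t => ⟨fun hA => ?_, fun hA => ?_⟩⟩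
  · have h : d.u A (t + d.w t) = d.u ∅ t := by rw [u_of_subset hA, u_empty, g_add_w]
    exact ⟨h.ge, h.le⟩
  · have h : d.u A t = d.u ∅ t := by rw [u_of_not_subset hA, u_empty]
    exact ⟨h.ge, h.le⟩

def quasilinear (S : Finset (Fin m)) (hS : S.Nonempty) (v : ℝ) (hv : 0 < v) :
    SMUtility m where
  S := S
  g t := v - t
  S_nonempty := hS
  strictAnti _ _ h := sub_lt_sub_left h v
  continuous := by fun_prop
  surjective c := ⟨v - c, sub_sub_cancel v c⟩
  neg_lt t := by linarith

/-- Here `w t = max 2 (2 * t + 4)` increases with `t`: a negative income effect. -/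
def negIncome (S : Finset (Fin m)) (hS : S.Nonempty) : SMUtility m where
  S := S
  g t := max (2 - t) ((4 - t) / 3)
  S_nonempty := hS
  strictAnti _ _ h := max_lt (lt_max_of_lt_left (by linarith)) (lt_max_of_lt_right (by linarith))
  continuous := by fun_prop
  surjective c := by
    beta_reduce
    rcases le_or_gt 1 c with hc | hc
    · exact ⟨2 - c, by rw [max_eq_left] <;> linarith⟩
    · exact ⟨4 - 3 * c, by rw [max_eq_right] <;> linarith⟩
  neg_lt t := lt_max_of_lt_left (by linarith)

@[simp] lemma quasilinear_S (S : Finset (Fin m)) (hS : S.Nonempty) (v : ℝ) (hv : 0 < v) :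
    (quasilinear S hS v hv).S = S := rfl

@[simp] lemma quasilinear_g (S : Finset (Fin m)) (hS : S.Nonempty) (v : ℝ) (hv : 0 < v)
    (t : ℝ) : (quasilinear S hS v hv).g t = v - t := rfl

@[simp] lemma negIncome_S (S : Finset (Fin m)) (hS : S.Nonempty) : (negIncome S hS).S = S := rfl

@[simp] lemma quasilinear_w_zero (S : Finset (Fin m)) (hS : S.Nonempty) (v : ℝ) (hv : 0 < v) :
    (quasilinear S hS v hv).w 0 = v :=
  w_zero_eq _ (by simp)

@[simp] lemma negIncome_w_zero (S : Finset (Fin m)) (hS : S.Nonempty) :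
    (negIncome S hS).w 0 = 4 :=
  w_zero_eq _ (by norm_num [negIncome])

lemma negIncome_add_g_lt {S : Finset (Fin m)} (hS : S.Nonempty) {t : ℝ} (ht : t < 5 / 2) :
    t + (negIncome S hS).g t < 3 := by
  simp only [negIncome]
  rcases le_total (2 - t) ((4 - t) / 3) with h | h
  · rw [max_eq_right h]; linarith
  · rw [max_eq_left h]; linarith

end SMUtility

open SMUtility

structure IsParetoIROutcome (D : Fin n → SMUtility m) (A : Fin n → Finset (Fin m))
    (q : Fin n → ℝ) : Prop where
  disjoint : DisjointAlloc A
  efficient : ¬ ∃ A' t', Dominates (toPref ∘ D) A q A' t'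
  ir : ∀ i, 0 ≤ (D i).u (A i) (q i)
  nonneg : ∀ i, 0 ≤ q i

def servedSet (D : Fin n → SMUtility m) (A : Fin n → Finset (Fin m)) : Finset (Fin n) :=
  {j | (D j).S ⊆ A j}

@[simp] lemma mem_servedSet {D : Fin n → SMUtility m} {A : Fin n → Finset (Fin m)} {j : Fin n} :
    j ∈ servedSet D A ↔ (D j).S ⊆ A j := by
  simp [servedSet]

namespace IsParetoIROutcome

variable {D : Fin n → SMUtility m} {A : Fin n → Finset (Fin m)} {q : Fin n → ℝ}

lemma pay_eq_zero (h : IsParetoIROutcome D A q) {i : Fin n} (hi : ¬ (D i).S ⊆ A i) :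
    q i = 0 := by
  have := h.ir i
  rw [u_of_not_subset hi] at this
  linarith [h.nonneg i]

/-- Compare with serving exactly the agents of `W`: a newly served agent can be charged her
willingness to pay, while a displaced winner must be refunded `q j + g (q j)` to stay
indifferent. -/
theorem sum_w_le (h : IsParetoIROutcome D A q) {W : Finset (Fin n)}
    (hW : (W : Set (Fin n)).PairwiseDisjoint fun j => (D j).S) :
    ∑ j ∈ W \ servedSet D A, (D j).w 0 ≤ ∑ j ∈ servedSet D A \ W, (q j + (D j).g (q j)) := by
  set Srv := servedSet D A
  by_contra! hlt
  set δ : Fin n → ℝ := fun j => (if j ∈ W \ Srv then (D j).w 0 else 0) -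
    (if j ∈ Srv \ W then q j + (D j).g (q j) else 0)
  set A' : Fin n → Finset (Fin m) := fun j => if j ∈ W then (D j).S else ∅
  have hutil : ∀ j, (D j).u (A' j) (q j + δ j) = (D j).u (A j) (q j) := by
    intro j
    by_cases hjW : j ∈ W <;> by_cases hj : (D j).S ⊆ A j
    · simp [A', δ, Srv, hjW, hj, u_of_subset]
    · simp [A', δ, Srv, hjW, hj, u_of_subset, u_of_not_subset, h.pay_eq_zero hj, g_w_zero]
    · simp [A', δ, Srv, hjW, hj, u_of_subset, u_empty]
    · simp [A', δ, Srv, hjW, hj, u_empty, u_of_not_subset]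
  have hsum : ∑ j, q j < ∑ j, (q j + δ j) := by
    have hδ : ∑ j, δ j = ∑ j ∈ W \ Srv, (D j).w 0 - ∑ j ∈ Srv \ W, (q j + (D j).g (q j)) := by
      simp only [δ]
      rw [Finset.sum_sub_distrib, Finset.sum_ite_mem, Finset.sum_ite_mem, Finset.univ_inter,
        Finset.univ_inter]
    rw [Finset.sum_add_distrib, hδ]
    linarith
  refine h.efficient ⟨A', fun j => q j + δ j, ?_, fun j => (hutil j).ge, hsum.le, Or.inr hsum⟩
  intro i j hij
  by_cases hi : i ∈ W
  · by_cases hj : j ∈ W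
    · simpa [A', hi, hj] using hW hi hj hij
    · simp [A', hj]
  · simp [A', hi]

lemma subset_servedSet (h : IsParetoIROutcome D A q) {W : Finset (Fin n)}
    (hW : (W : Set (Fin n)).PairwiseDisjoint fun j => (D j).S) (hSrv : servedSet D A ⊆ W) :
    W ⊆ servedSet D A := by
  have hle := h.sum_w_le hW
  rw [Finset.sdiff_eq_empty_iff_subset.2 hSrv, Finset.sum_empty] at hle
  by_contra hW'
  exact (Finset.sum_pos (fun j _ => (D j).w_pos 0) (Finset.sdiff_nonempty.2 hW')).not_ge hle

end IsParetoIROutcome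

structure IsLocalGlobal (D : Fin n → SMUtility m) (a b : Fin m) (i₀ i₁ : Fin n) (v : ℝ) :
    Prop where
  left : (D i₀).S = {a}
  right : (D i₁).S = {b}
  global : ∀ j, j ≠ i₀ → j ≠ i₁ → (D j).S = {a, b} ∧ ∀ t, (D j).g t = v - t

namespace IsLocalGlobal

variable {D : Fin n → SMUtility m} {A : Fin n → Finset (Fin m)} {q : Fin n → ℝ} {a b : Fin m}
  {i₀ i₁ : Fin n} {v : ℝ}

lemma eq_of_served (hD : IsLocalGlobal D a b i₀ i₁ v) (hA : DisjointAlloc A) {j k : Fin n}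
    (hj₀ : j ≠ i₀) (hj₁ : j ≠ i₁) (hj : (D j).S ⊆ A j) (hk : a ∈ A k ∨ b ∈ A k) : j = k := by
  have hSj := (hD.global j hj₀ hj₁).1
  rcases hk with hk | hk
  · exact hA.eq_of_mem (hj (by simp [hSj])) hk
  · exact hA.eq_of_mem (hj (by simp [hSj])) hk

lemma update_left (hD : IsLocalGlobal D a b i₀ i₁ v) (h01 : i₀ ≠ i₁) {d : SMUtility m}
    (hd : d.S = {a}) : IsLocalGlobal (Function.update D i₀ d) a b i₀ i₁ v :=
  ⟨by simp [hd], by simp [Function.update_of_ne h01.symm, hD.right],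
    fun j hj₀ hj₁ => by simpa [Function.update_of_ne hj₀] using hD.global j hj₀ hj₁⟩

lemma update_right (hD : IsLocalGlobal D a b i₀ i₁ v) (h01 : i₀ ≠ i₁) {d : SMUtility m}
    (hd : d.S = {b}) : IsLocalGlobal (Function.update D i₁ d) a b i₀ i₁ v :=
  ⟨by simp [Function.update_of_ne h01, hD.left], by simp [hd],
    fun j hj₀ hj₁ => by simpa [Function.update_of_ne hj₁] using hD.global j hj₀ hj₁⟩

theorem serves_local (hD : IsLocalGlobal D a b i₀ i₁ v) (h : IsParetoIROutcome D A q)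
    (hab : a ≠ b) (h01 : i₀ ≠ i₁) (hv : v < (D i₀).w 0 + (D i₁).w 0) :
    a ∈ A i₀ ∧ b ∈ A i₁ := by
  have hW : (({i₀, i₁} : Finset (Fin n)) : Set (Fin n)).PairwiseDisjoint fun j => (D j).S := by
    rw [Finset.coe_pair]
    exact (Set.pairwiseDisjoint_singleton _ _).insert (by simp [hD.left, hD.right, hab])
  by_cases hSrv : servedSet D A ⊆ {i₀, i₁}
  · have hsub := h.subset_servedSet hW hSrv
    simpa [hD.left, hD.right] using And.intro (hsub (Finset.mem_insert_self _ _))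
      (hsub (Finset.mem_insert_of_mem (Finset.mem_singleton_self _)))
  obtain ⟨j, hjS, hjW⟩ := Finset.not_subset.1 hSrv
  simp only [Finset.mem_insert, Finset.mem_singleton, not_or] at hjW
  obtain ⟨hj₀, hj₁⟩ := hjW
  rw [mem_servedSet] at hjS
  have hlocal : ({i₀, i₁} : Finset (Fin n)) \ servedSet D A = {i₀, i₁} := by
    refine Finset.sdiff_eq_self_of_disjoint (Finset.disjoint_left.2 fun k hk hkS => ?_)
    rw [mem_servedSet] at hkS
    simp only [Finset.mem_insert, Finset.mem_singleton] at hk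
    rcases hk with rfl | rfl
    · exact hj₀ (hD.eq_of_served h.disjoint hj₀ hj₁ hjS (Or.inl (hkS (by simp [hD.left]))))
    · exact hj₁ (hD.eq_of_served h.disjoint hj₀ hj₁ hjS (Or.inr (hkS (by simp [hD.right]))))
  have hglobal : servedSet D A \ {i₀, i₁} = {j} := by
    ext k
    simp only [Finset.mem_sdiff, mem_servedSet, Finset.mem_insert, Finset.mem_singleton, not_or]
    refine ⟨fun ⟨hk, hk₀, hk₁⟩ => hD.eq_of_served h.disjoint hk₀ hk₁ hk ?_, ?_⟩
    · exact Or.inl (hjS (by simp [(hD.global j hj₀ hj₁).1]))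
    · rintro rfl
      exact ⟨hjS, hj₀, hj₁⟩
  have hle := h.sum_w_le hW
  rw [hlocal, hglobal, Finset.sum_pair h01, Finset.sum_singleton, (hD.global j hj₀ hj₁).2] at hle
  linarith

theorem le_of_serves_local (hD : IsLocalGlobal D a b i₀ i₁ v) (h : IsParetoIROutcome D A q)
    (ha : a ∈ A i₀) (hb : b ∈ A i₁) {i₂ : Fin n} (h01 : i₀ ≠ i₁) (h02 : i₀ ≠ i₂)
    (h12 : i₁ ≠ i₂) :
    v ≤ (q i₀ + (D i₀).g (q i₀)) + (q i₁ + (D i₁).g (q i₁)) := by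
  have hserved : servedSet D A = {i₀, i₁} := by
    ext k
    simp only [mem_servedSet, Finset.mem_insert, Finset.mem_singleton]
    refine ⟨fun hk => ?_, ?_⟩
    · by_contra! hk'
      exact hk'.1 (hD.eq_of_served h.disjoint hk'.1 hk'.2 hk (Or.inl ha))
    · rintro (rfl | rfl)
      · simpa [hD.left] using ha
      · simpa [hD.right] using hb
  have hle := h.sum_w_le (W := {i₂}) (by simp)
  rw [hserved, Finset.sdiff_eq_self_of_disjoint (by simp [h02.symm, h12.symm]),
    Finset.sdiff_eq_self_of_disjoint (by simp [h02.symm, h12.symm]), Finset.sum_singleton,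
    Finset.sum_pair h01,
    w_zero_eq _ (show (D i₂).g v = 0 by simp [(hD.global i₂ h02.symm h12.symm).2])] at hle
  exact hle

end IsLocalGlobal

section Mechanism

variable (F : (Fin n → SMUtility m) → Fin n → Finset (Fin m))
  (P : (Fin n → SMUtility m) → Fin n → ℝ)

def IsDSIC : Prop :=
  ∀ (D : Fin n → SMUtility m) (i : Fin n) (d : SMUtility m),
    (D i).u (F (Function.update D i d) i) (P (Function.update D i d) i) ≤ (D i).u (F D i) (P D i)

variable {F P}

lemma pay_le_of_quasilinear_deviation
    (hir : ∀ (D : Fin n → SMUtility m) i, 0 ≤ (D i).u (F D i) (P D i)) (hdsic : IsDSIC F P)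
    {D : Fin n → SMUtility m} {i : Fin n} {v : ℝ} (hv : 0 < v)
    (hserved : (D i).S ⊆ F D i)
    (hserved' : (D i).S ⊆
      F (Function.update D i (quasilinear (D i).S (D i).S_nonempty v hv)) i) :
    P D i ≤ v := by
  have hir' := hir (Function.update D i (quasilinear (D i).S (D i).S_nonempty v hv)) i
  have hdsic' := hdsic D i (quasilinear (D i).S (D i).S_nonempty v hv)
  rw [Function.update_self, u_of_subset (by simpa using hserved'), quasilinear_g] at hir'
  rw [u_of_subset hserved', u_of_subset hserved] at hdsic'
  linarith [(D i).strictAnti.le_iff_ge.1 hdsic']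

theorem false_of_dsic_pareto_ir (hout : ∀ D, IsParetoIROutcome D (F D) (P D))
    (hdsic : IsDSIC F P) {a b : Fin m} (hab : a ≠ b) {i₀ i₁ i₂ : Fin n} (h01 : i₀ ≠ i₁)
    (h02 : i₀ ≠ i₂) (h12 : i₁ ≠ i₂) : False := by
  set D : Fin n → SMUtility m := fun j =>
    if j = i₀ then negIncome {a} (Finset.singleton_nonempty a)
    else if j = i₁ then negIncome {b} (Finset.singleton_nonempty b)
    else quasilinear {a, b} (Finset.insert_nonempty a {b}) 6 (by norm_num)
  have hD₀ : D i₀ = negIncome {a} (Finset.singleton_nonempty a) := by simp [D]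
  have hD₁ : D i₁ = negIncome {b} (Finset.singleton_nonempty b) := by simp [D, h01.symm]
  have hD : IsLocalGlobal D a b i₀ i₁ 6 :=
    ⟨by simp [hD₀], by simp [hD₁], fun j hj₀ hj₁ => by simp [D, hj₀, hj₁]⟩
  obtain ⟨ha, hb⟩ := hD.serves_local (hout D) hab h01 (by norm_num [hD₀, hD₁])
  have hp₀ : P D i₀ ≤ 9 / 4 := by
    refine pay_le_of_quasilinear_deviation (fun D => (hout D).ir) hdsic (by norm_num)
      (by simpa [hD₀] using ha) ?_
    have hD' := hD.update_left h01 (d := quasilinear (D i₀).S (D i₀).S_nonempty (9 / 4)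
      (by norm_num)) (by simp [hD₀])
    simpa [hD₀] using (hD'.serves_local (hout _) hab h01
      (by norm_num [Function.update_of_ne h01.symm, hD₁])).1
  have hp₁ : P D i₁ ≤ 9 / 4 := by
    refine pay_le_of_quasilinear_deviation (fun D => (hout D).ir) hdsic (by norm_num)
      (by simpa [hD₁] using hb) ?_
    have hD' := hD.update_right h01 (d := quasilinear (D i₁).S (D i₁).S_nonempty (9 / 4)
      (by norm_num)) (by simp [hD₁])
    simpa [hD₁] using (hD'.serves_local (hout _) hab h01
      (by norm_num [Function.update_of_ne h01, hD₀])).2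
  have hle := hD.le_of_serves_local (hout D) ha hb h01 h02 h12
  rw [hD₀, hD₁] at hle
  linarith [negIncome_add_g_lt (Finset.singleton_nonempty a) (show P D i₀ < 5 / 2 by linarith),
    negIncome_add_g_lt (Finset.singleton_nonempty b) (show P D i₁ < 5 / 2 by linarith)]

end Mechanism

end

/-- Impossibility: if `n ≥ 3`, `m ≥ 2`, and the domain `T` contains all single-minded
dichotomous classical preferences, no mechanism on `T^n` is simultaneously DSIC,
Pareto efficient, individually rational, and satisfies no subsidy. -/
theorem stmt_9 (n m : ℕ) (hn : 3 ≤ n) (hm : 2 ≤ m)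
    (T : Set (ClassicalPref m)) (hT : ∀ R : ClassicalPref m, IsSingleMinded R → R ∈ T) :
    ¬ ∃ (f : (Fin n → ClassicalPref m) → Fin n → Finset (Fin m))
        (p : (Fin n → ClassicalPref m) → Fin n → ℝ),
      (∀ Rp : Fin n → ClassicalPref m, (∀ j, Rp j ∈ T) → DisjointAlloc (f Rp)) ∧
      -- DSIC
      (∀ Rp : Fin n → ClassicalPref m, (∀ j, Rp j ∈ T) →
        ∀ (i : Fin n) (R' : ClassicalPref m), R' ∈ T →
          (Rp i).pref (f Rp i, p Rp i)
            (f (Function.update Rp i R') i, p (Function.update Rp i R') i)) ∧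
      -- Pareto efficiency
      (∀ Rp : Fin n → ClassicalPref m, (∀ j, Rp j ∈ T) →
        ¬ ∃ (A' : Fin n → Finset (Fin m)) (t' : Fin n → ℝ),
          Dominates Rp (f Rp) (p Rp) A' t') ∧
      -- Individual rationality
      (∀ Rp : Fin n → ClassicalPref m, (∀ j, Rp j ∈ T) →
        ∀ i, (Rp i).pref (f Rp i, p Rp i) (∅, 0)) ∧
      -- No subsidy
      (∀ Rp : Fin n → ClassicalPref m, (∀ j, Rp j ∈ T) → ∀ i, 0 ≤ p Rp i) := by
  rintro ⟨f, p, hAlloc, hDSIC, hPE, hIR, hNS⟩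
  have hT' : ∀ (D : Fin n → SMUtility m) j, (SMUtility.toPref ∘ D) j ∈ T :=
    fun D j => hT _ (D j).isSingleMinded
  refine false_of_dsic_pareto_ir (F := fun D => f (SMUtility.toPref ∘ D))
    (P := fun D => p (SMUtility.toPref ∘ D))
    (fun D => ⟨hAlloc _ (hT' D), hPE _ (hT' D),
      fun i => by simpa [SMUtility.toPref_pref, SMUtility.u_empty] using hIR _ (hT' D) i,
      hNS _ (hT' D)⟩)
    (fun D i d => by
      simpa [SMUtility.toPref_pref, Function.comp_update] using
        hDSIC _ (hT' D) i d.toPref (hT _ d.isSingleMinded))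
    (a := ⟨0, by omega⟩) (b := ⟨1, by omega⟩) (i₀ := ⟨0, by omega⟩) (i₁ := ⟨1, by omega⟩)
    (i₂ := ⟨2, by omega⟩) ?_ ?_ ?_ ?_ <;> simp [Fin.ext_iff]
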